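/- Uniqueness in the division lemma: with h quasi-homogeneous of degree δ with isolated singularity and X₀ = δ^{-1}X_h, if a·h = −X₀(b) for formal power series a, b, then a lies in the image of the derivation X₀ on ℂ[[x,y]]. -/

import Mathlib

/-!
Since `δ h = R h = p₁ x h_x + p₂ y h_y`, the relation `a h = -X₀ b` rearranges to the syzygy
`h_x Q = h_y P` with `P = b_x + p₂ y a` and `Q = b_y - p₁ x a`. As the singularity is isolated,
`(h_x, h_y)` contains powers `x^N` and `y^M`, which form a regular sequence; hence `P = h_x c` and
`Q = h_y c` for some `c`. Computing `∂_y P - ∂_x Q` from both descriptions gives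
`(R + p₁ + p₂) a = X₀ (-δ c)`. Solve `(R + δ) u = -δ c`; the commutation relation
`(R + p₁ + p₂) X₀ = X₀ (R + δ)` then gives `(R + p₁ + p₂) (X₀ u - a) = 0`, and `R + p₁ + p₂` is
injective because it acts on the monomial `x^i y^j` by the positive scalar `p₁ (i + 1) + p₂ (j + 1)`.
-/

set_option maxHeartbeats 1000000
set_option synthInstance.maxHeartbeats 1000000
noncomputable section

/-- The ring of formal power series in two variables over ℂ. -/
abbrev A2 := MvPowerSeries (Fin 2) ℂ

/-- Coefficient-wise partial derivative of a formal power series. -/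
def pd (i : Fin 2) (f : A2) : A2 :=
  fun m => (((m i : ℕ) + 1 : ℕ) : ℂ) * MvPowerSeries.coeff (m + Finsupp.single i 1) f

/-- The weighted radial derivation `R = p₁ x ∂_x + p₂ y ∂_y` on formal power series. -/
def Rder (p₁ p₂ : ℕ) (f : A2) : A2 :=
  (p₁ : ℂ) • (MvPowerSeries.X 0 * pd 0 f) + (p₂ : ℂ) • (MvPowerSeries.X 1 * pd 1 f)

/-- The normalized Hamiltonian derivation `X₀ = δ⁻¹ (h_y ∂_x − h_x ∂_y)` associated to `h`. -/
def ham (δ : ℕ) (h : A2) (f : A2) : A2 :=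
  ((δ : ℂ))⁻¹ • (pd 1 h * pd 0 f - pd 0 h * pd 1 f)

/-- Substitution of a series `h` (with zero constant term) into a one-variable formal power
series `g`, i.e. `g(h) = Σₖ gₖ hᵏ`: only finitely many `k` contribute to each coefficient. -/
def substPS (h : A2) (g : PowerSeries ℂ) : A2 :=
  fun m => ∑ k ∈ Finset.range ((m.sum fun _ e => e) + 1),
    PowerSeries.coeff k g * MvPowerSeries.coeff m (h ^ k)

open MvPowerSeries Finsupp

theorem exists_eq_mul_of_mul_eq_mul_of_mem_span_pair {R : Type*} [CommRing R]
    {f g r s P Q : R} (hr : r ∈ Ideal.span {f, g}) (hs : s ∈ Ideal.span {f, g})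
    (hr_reg : IsLeftRegular r) (hrs : ∀ u v, s * u = r * v → r ∣ u) (hPQ : f * Q = g * P) :
    ∃ t, P = f * t ∧ Q = g * t := by
  obtain ⟨α, β, hαβ⟩ := Ideal.mem_span_pair.1 hr
  obtain ⟨γ, η, hγη⟩ := Ideal.mem_span_pair.1 hs
  have hfu : f * (α * P + β * Q) = r * P := by linear_combination β * hPQ + P * hαβ
  have hgu : g * (α * P + β * Q) = r * Q := by linear_combination -α * hPQ + Q * hαβ
  obtain ⟨t, ht⟩ := hrs (α * P + β * Q) (γ * P + η * Q) <| by
    linear_combination -(α * P + β * Q) * hγη + γ * hfu + η * hgu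
  refine ⟨t, hr_reg ?_, hr_reg ?_⟩
  · linear_combination -hfu + f * ht
  · linear_combination -hgu + g * ht

namespace MvPowerSeries

section CommSemiring

variable {σ R : Type*} [CommSemiring R]

theorem isLeftRegular_X_pow (i : σ) (n : ℕ) : IsLeftRegular (X i ^ n : MvPowerSeries σ R) := by
  intro f g h
  ext m
  have := congrArg (coeff (single i n + m)) h
  rwa [X_pow_eq, coeff_add_monomial_mul, coeff_add_monomial_mul, one_mul, one_mul] at this

theorem X_pow_dvd_of_X_pow_mul_eq {i j : σ} (hij : i ≠ j) {N M : ℕ} {u v : MvPowerSeries σ R}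
    (h : X j ^ M * u = X i ^ N * v) : X i ^ N ∣ u := by
  rw [X_pow_dvd_iff]
  intro m hm
  have := congrArg (coeff (single j M + m)) h
  rwa [X_pow_eq j, coeff_add_monomial_mul, one_mul, X_pow_dvd_iff.1 (dvd_mul_right _ v)] at this
  simpa [single_apply, hij] using hm

theorem pderiv_comm (i j : σ) (f : MvPowerSeries σ R) :
    pderiv R i (pderiv R j f) = pderiv R j (pderiv R i f) := by
  rcases eq_or_ne i j with rfl | hij
  · rfl
  ext m
  simp only [coeff_pderiv, add_right_comm m (single i 1), Finsupp.add_apply,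
    single_eq_of_ne hij, single_eq_of_ne hij.symm, add_zero]
  ring

theorem coeff_X_mul_pderiv (i : σ) (f : MvPowerSeries σ R) (m : σ →₀ ℕ) :
    coeff m (X i * pderiv R i f) = m i * coeff m f := by
  classical
  rw [X_def, coeff_monomial_mul, one_mul]
  split_ifs with hm
  · rw [coeff_pderiv, tsub_add_cancel_of_le hm, tsub_apply, single_eq_same, ← Nat.cast_add_one,
      Nat.sub_one_add_one_eq_of_pos ((single_le_iff).1 hm), mul_comm]
  · have : m i = 0 := by simpa [single_le_iff] using hm
    simp [this]

end CommSemiring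

theorem exists_X_pow_mem_of_finiteDimensional_quotient {σ k : Type*} [Field k]
    (I : Ideal (MvPowerSeries σ k)) [FiniteDimensional k (MvPowerSeries σ k ⧸ I)] (i : σ) :
    ∃ n, (X i : MvPowerSeries σ k) ^ n ∈ I := by
  have := IsArtinianRing.of_finite k (MvPowerSeries σ k ⧸ I)
  obtain ⟨n, hn⟩ := IsLocalRing.exists_maximalIdeal_pow_le_of_isArtinianRing_quotient I
  refine ⟨n, hn (Ideal.pow_mem_pow ?_ n)⟩
  rw [IsLocalRing.mem_maximalIdeal, mem_nonunits_iff, isUnit_iff_constantCoeff, constantCoeff_X]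
  exact not_isUnit_zero

end MvPowerSeries

theorem pd_eq_pderiv (i : Fin 2) : pd i = pderiv ℂ i := by
  ext f m
  rw [coeff_pderiv, mul_comm]
  exact congrArg (· * coeff (m + single i 1) f) (Nat.cast_succ (m i))

theorem Rder_eq (p₁ p₂ : ℕ) (f : A2) :
    Rder p₁ p₂ f = (p₁ : ℂ) • (X 0 * pderiv ℂ 0 f) + (p₂ : ℂ) • (X 1 * pderiv ℂ 1 f) := by
  simp only [Rder, pd_eq_pderiv]

theorem ham_eq (δ : ℕ) (h f : A2) :
    ham δ h f = (δ : ℂ)⁻¹ • (pderiv ℂ 1 h * pderiv ℂ 0 f - pderiv ℂ 0 h * pderiv ℂ 1 f) := by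
  simp only [ham, pd_eq_pderiv]

theorem coeff_Rder (p₁ p₂ : ℕ) (f : A2) (m : Fin 2 →₀ ℕ) :
    coeff m (Rder p₁ p₂ f) = ((p₁ * m 0 + p₂ * m 1 : ℕ) : ℂ) * coeff m f := by
  rw [Rder_eq, map_add, coeff_smul, coeff_smul, coeff_X_mul_pderiv, coeff_X_mul_pderiv]
  push_cast
  ring

theorem Rder_sub (p₁ p₂ : ℕ) (f g : A2) : Rder p₁ p₂ (f - g) = Rder p₁ p₂ f - Rder p₁ p₂ g := by
  ext m
  simp only [coeff_Rder, map_sub, mul_sub]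

theorem Rder_smul (p₁ p₂ : ℕ) (r : ℂ) (f : A2) : Rder p₁ p₂ (r • f) = r • Rder p₁ p₂ f := by
  ext m
  simp only [coeff_Rder, coeff_smul, mul_left_comm]

theorem Rder_mul (p₁ p₂ : ℕ) (f g : A2) :
    Rder p₁ p₂ (f * g) = Rder p₁ p₂ f * g + f * Rder p₁ p₂ g := by
  simp only [Rder_eq, Derivation.leibniz, smul_eq_mul, Algebra.smul_def]
  ring

theorem Rder_pderiv (p₁ p₂ : ℕ) (i : Fin 2) (f : A2) :
    Rder p₁ p₂ (pderiv ℂ i f) = pderiv ℂ i (Rder p₁ p₂ f) - (![p₁, p₂] i : ℂ) • pderiv ℂ i f := by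
  ext m
  rw [map_sub, coeff_smul, coeff_pderiv, coeff_Rder, coeff_Rder, coeff_pderiv]
  fin_cases i <;> simp <;> ring

theorem coeff_Rder_add_smul (p₁ p₂ s : ℕ) (f : A2) (m : Fin 2 →₀ ℕ) :
    coeff m (Rder p₁ p₂ f + (s : ℂ) • f) = ((p₁ * m 0 + p₂ * m 1 + s : ℕ) : ℂ) * coeff m f := by
  rw [map_add, coeff_Rder, coeff_smul]
  push_cast
  ring

theorem Rder_add_smul_injective (p₁ p₂ : ℕ) {s : ℕ} (hs : 0 < s) :
    Function.Injective fun f : A2 => Rder p₁ p₂ f + (s : ℂ) • f := by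
  intro f g hfg
  ext m
  have hm := congrArg (coeff m) hfg
  simp only [coeff_Rder_add_smul] at hm
  exact mul_left_cancel₀ (Nat.cast_ne_zero.2 (by omega)) hm

theorem exists_Rder_add_smul_eq (p₁ p₂ : ℕ) {s : ℕ} (hs : 0 < s) (z : A2) :
    ∃ f : A2, Rder p₁ p₂ f + (s : ℂ) • f = z := by
  let f : A2 := fun m => ((p₁ * m 0 + p₂ * m 1 + s : ℕ) : ℂ)⁻¹ * coeff m z
  refine ⟨f, ?_⟩
  ext m
  show coeff m (Rder p₁ p₂ f + (s : ℂ) • f) = _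
  rw [coeff_Rder_add_smul]
  exact mul_inv_cancel_left₀ (Nat.cast_ne_zero.2 (by omega)) (coeff m z)

theorem Rder_ham {p₁ p₂ δ : ℕ} {h : A2} (hqh : Rder p₁ p₂ h = (δ : ℂ) • h) (f : A2) :
    Rder p₁ p₂ (ham δ h f) + ((p₁ + p₂ : ℕ) : ℂ) • ham δ h f =
      ham δ h (Rder p₁ p₂ f + (δ : ℂ) • f) := by
  have hRh : ∀ i, Rder p₁ p₂ (pderiv ℂ i h) = ((δ : ℂ) - ![p₁, p₂] i) • pderiv ℂ i h := fun i => by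
    rw [Rder_pderiv, hqh, Derivation.map_smul, sub_smul]
  simp only [ham_eq, Rder_smul, Rder_sub, Rder_mul, hRh, Rder_pderiv, map_add, Derivation.map_smul]
  simp only [Algebra.smul_def, map_sub, map_add, map_natCast, Matrix.cons_val_zero,
    Matrix.cons_val_one, Matrix.cons_val_fin_one, Nat.cast_add]
  ring

def curl (P Q : A2) : A2 := pderiv ℂ 1 P - pderiv ℂ 0 Q

theorem curl_radial (p₁ p₂ : ℕ) (a b : A2) :
    curl (pderiv ℂ 0 b + (p₂ : ℂ) • (X 1 * a)) (pderiv ℂ 1 b - (p₁ : ℂ) • (X 0 * a)) =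
      Rder p₁ p₂ a + ((p₁ + p₂ : ℕ) : ℂ) • a := by
  simp only [curl, Rder_eq, map_add, map_sub, Derivation.leibniz, pderiv_X_self,
    pderiv_comm 1 0 b, smul_eq_mul, Algebra.smul_def]
  simp only [map_add, map_natCast, Derivation.map_natCast, mul_one, mul_zero, add_zero, Nat.cast_add]
  ring

theorem curl_mul_pderiv {δ : ℕ} (hδ : δ ≠ 0) (h c : A2) :
    curl (pderiv ℂ 0 h * c) (pderiv ℂ 1 h * c) = ham δ h (-(δ : ℂ) • c) := by
  simp only [curl, ham_eq, Derivation.leibniz, Derivation.map_smul, pderiv_comm 1 0 h, smul_eq_mul]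
  rw [mul_smul_comm, mul_smul_comm, ← smul_sub, smul_smul, mul_neg,
    inv_mul_cancel₀ (Nat.cast_ne_zero.2 hδ), neg_one_smul]
  ring

theorem pderiv_syzygy_of_mul_eq_neg_ham {p₁ p₂ δ : ℕ} (hδ : δ ≠ 0) {h a b : A2}
    (hqh : Rder p₁ p₂ h = (δ : ℂ) • h) (hab : a * h = -ham δ h b) :
    pderiv ℂ 0 h * (pderiv ℂ 1 b - (p₁ : ℂ) • (X 0 * a)) =
      pderiv ℂ 1 h * (pderiv ℂ 0 b + (p₂ : ℂ) • (X 1 * a)) := by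
  have hδab : (δ : ℂ) • (a * h) = pderiv ℂ 0 h * pderiv ℂ 1 b - pderiv ℂ 1 h * pderiv ℂ 0 b := by
    rw [hab, ham_eq, smul_neg, smul_smul, mul_inv_cancel₀ (Nat.cast_ne_zero.2 hδ), one_smul,
      neg_sub]
  have hRab : (δ : ℂ) • (a * h) = a * Rder p₁ p₂ h := by
    rw [hqh, mul_smul_comm]
  rw [Rder_eq] at hRab
  simp only [Algebra.smul_def] at hδab hRab ⊢
  linear_combination hRab - hδab

theorem stmt13_general (p₁ p₂ δ : ℕ) (hp₁ : 0 < p₁) (hδ : 0 < δ) (h : A2)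
    (hqh : Rder p₁ p₂ h = (δ : ℂ) • h)
    (hiso : FiniteDimensional ℂ (A2 ⧸ Ideal.span {pd 0 h, pd 1 h}))
    (a b : A2) (hab : a * h = -(ham δ h b)) :
    ∃ c : A2, ham δ h c = a := by
  rw [pd_eq_pderiv, pd_eq_pderiv] at hiso
  let I : Ideal A2 := Ideal.span {pderiv ℂ 0 h, pderiv ℂ 1 h}
  obtain ⟨N, hN⟩ := exists_X_pow_mem_of_finiteDimensional_quotient I 0
  obtain ⟨M, hM⟩ := exists_X_pow_mem_of_finiteDimensional_quotient I 1
  obtain ⟨c, hP, hQ⟩ := exists_eq_mul_of_mul_eq_mul_of_mem_span_pair hN hM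
    (isLeftRegular_X_pow 0 N) (fun _ _ => X_pow_dvd_of_X_pow_mul_eq (by decide))
    (pderiv_syzygy_of_mul_eq_neg_ham hδ.ne' hqh hab)
  obtain ⟨u, hu⟩ := exists_Rder_add_smul_eq p₁ p₂ hδ (-(δ : ℂ) • c)
  refine ⟨u, Rder_add_smul_injective p₁ p₂ (Nat.add_pos_left hp₁ p₂) ?_⟩
  dsimp only
  rw [Rder_ham hqh, hu, ← curl_mul_pderiv hδ.ne', ← hP, ← hQ, curl_radial]

/-- Uniqueness in the division lemma: if `a·h = −X₀(b)`, then `a` lies in the image of the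
derivation `X₀`. -/
theorem stmt13 (p₁ p₂ δ : ℕ) (hp₁ : 0 < p₁) (hp₂ : 0 < p₂) (hδ : 0 < δ) (h : A2)
    (hqh : Rder p₁ p₂ h = (δ : ℂ) • h)
    (hiso : FiniteDimensional ℂ (A2 ⧸ Ideal.span {pd 0 h, pd 1 h}))
    (a b : A2) (hab : a * h = -(ham δ h b)) :
    ∃ c : A2, ham δ h c = a :=
  stmt13_general p₁ p₂ δ hp₁ hδ h hqh hiso a b hab
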